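/- Let S be an asymptotically compact semiflow on a complete metric space X and let 𝒜 be an attractor of S with attraction basin Ω = Ω(𝒜). Then for every x ∈ Ω there exists ε > 0 such that 𝒜 attracts the ball B(x,ε); in particular Ω is an open subset of X. -/

import Mathlib

open Metric Set Filter Topology Bornology

/-- A semiflow on a metric space `X`: a map `S : [0,∞) × X → X`, continuous on
`[0,∞) × X`, with `S 0 x = x` and `S (t+s) x = S t (S s x)` for `t, s ≥ 0`. -/
structure Semiflow (X : Type*) [MetricSpace X] where
  toFun : ℝ → X → X
  continuousOn : ContinuousOn (fun p : ℝ × X => toFun p.1 p.2) (Set.Ici (0:ℝ) ×ˢ Set.univ)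
  map_zero : ∀ x, toFun 0 x = x
  map_add : ∀ (t s : ℝ), 0 ≤ t → 0 ≤ s → ∀ x, toFun (t + s) x = toFun t (toFun s x)

namespace Semiflow

variable {X : Type*} [MetricSpace X] (φ : Semiflow X)

/-- Asymptotic compactness: every bounded sequence `x n`, with times `t n → ∞`,
such that `S (t n) (x n)` is bounded, has a convergent subsequence of images. -/
def AsympCompact : Prop :=
  ∀ (x : ℕ → X) (t : ℕ → ℝ), (∀ n, 0 ≤ t n) →
    IsBounded (Set.range x) → Tendsto t atTop atTop →
    IsBounded (Set.range fun n => φ.toFun (t n) (x n)) →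
    ∃ (y : X) (k : ℕ → ℕ), StrictMono k ∧
      Tendsto (fun n => φ.toFun (t (k n)) (x (k n))) atTop (𝓝 y)

/-- `M` attracts `B`: for every `ε > 0` there is `T > 0` with
`S t B ⊆ B(M,ε)` for all `t > T`. -/
def Attracts (M B : Set X) : Prop :=
  ∀ ε > (0:ℝ), ∃ T > (0:ℝ), ∀ t > T, ∀ x ∈ B, infDist (φ.toFun t x) M < ε

/-- `M` is invariant: `S t M = M` for all `t ≥ 0`. -/
def Invariant (M : Set X) : Prop :=
  ∀ t ≥ (0:ℝ), φ.toFun t '' M = M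

/-- An attractor: a compact invariant set attracting a neighborhood of itself. -/
def IsAttractor (A : Set X) : Prop :=
  IsCompact A ∧ φ.Invariant A ∧ ∃ U : Set X, A ⊆ interior U ∧ φ.Attracts A U

/-- The attraction basin of `A`: points whose orbits converge to `A`. -/
def basin (A : Set X) : Set X :=
  {x | Tendsto (fun t : ℝ => infDist (φ.toFun t x) A) atTop (𝓝 0)}

/-- The ω-limit set of a set `A`. -/
def omegaLimit (A : Set X) : Set X :=
  {y | ∃ (x : ℕ → X) (t : ℕ → ℝ), (∀ n, x n ∈ A) ∧ (∀ n, 0 ≤ t n) ∧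
    Tendsto t atTop atTop ∧ Tendsto (fun n => φ.toFun (t n) (x n)) atTop (𝓝 y)}

/-- A complete trajectory of the semiflow. -/
def IsCompleteTraj (γ : ℝ → X) : Prop :=
  ∀ s t : ℝ, s ≤ t → γ t = φ.toFun (t - s) (γ s)

/-- ω-limit set of a complete trajectory. -/
def trajOmega (γ : ℝ → X) : Set X :=
  {y | ∃ t : ℕ → ℝ, Tendsto t atTop atTop ∧ Tendsto (fun n => γ (t n)) atTop (𝓝 y)}

/-- α-limit set of a complete trajectory. -/
def trajAlpha (γ : ℝ → X) : Set X :=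
  {y | ∃ t : ℕ → ℝ, Tendsto t atTop atBot ∧ Tendsto (fun n => γ (t n)) atTop (𝓝 y)}

/-- The dual repeller of `A` inside `𝒜`. -/
def dualRepeller (𝒜 A : Set X) : Set X :=
  {x ∈ 𝒜 | φ.omegaLimit {x} ∩ A = ∅}

/-- `A` is an attractor of the restricted semiflow on the invariant set `𝒜`:
`A ⊆ 𝒜` is compact, invariant, and attracts a relative neighborhood of itself in `𝒜`. -/
def IsAttractorIn (𝒜 A : Set X) : Prop :=
  A ⊆ 𝒜 ∧ IsCompact A ∧ φ.Invariant A ∧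
    ∃ V : Set X, IsOpen V ∧ A ⊆ V ∧ φ.Attracts A (𝒜 ∩ V)

/-- `M 1, …, M l` is a Morse decomposition of `𝒜` with Morse filtration
`∅ = A 0 ⊊ A 1 ⊊ ⋯ ⊊ A l = 𝒜`. -/
def IsMorseDecompositionWithFiltration (𝒜 : Set X) (l : ℕ) (M A : ℕ → Set X) : Prop :=
  A 0 = (∅ : Set X) ∧ A l = 𝒜 ∧
  (∀ k, 1 ≤ k → k ≤ l → φ.IsAttractorIn 𝒜 (A k)) ∧
  (∀ k, 1 ≤ k → k ≤ l → A (k - 1) ⊂ A k) ∧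
  (∀ k, 1 ≤ k → k ≤ l → M k = A k ∩ φ.dualRepeller 𝒜 (A (k - 1)))

/-- `M 1, …, M l` is a Morse decomposition of `𝒜`. -/
def IsMorseDecomposition (𝒜 : Set X) (l : ℕ) (M : ℕ → Set X) : Prop :=
  ∃ A : ℕ → Set X, φ.IsMorseDecompositionWithFiltration 𝒜 l M A

/-- The Dini derivative of `V` along the semiflow. -/
noncomputable def dini (V : X → ℝ) (x : X) : ℝ :=
  Filter.limsup (fun t : ℝ => (V (φ.toFun t x) - V x) / t) (𝓝[>] (0:ℝ))

end Semiflow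

/-- `A ⊂⊂ B`: the closure of `A` is contained in the interior of `B` and
`dist (A, ∂B) > 0`. -/
def WayInside {X : Type*} [MetricSpace X] (A B : Set X) : Prop :=
  closure A ⊆ interior B ∧ ∃ δ > (0:ℝ), ∀ x ∈ A, ∀ y ∈ frontier B, δ ≤ dist x y

/-- `V` is radially unbounded on the open set `Ω`. -/
def RadiallyUnbounded {X : Type*} [MetricSpace X] (V : X → ℝ) (Ω : Set X) : Prop :=
  ∀ R > (0:ℝ), ∃ B : Set X, IsBounded B ∧ IsClosed B ∧ B ⊆ Ω ∧ WayInside B Ω ∧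
    ∀ x ∈ Ω \ B, R < V x

/-- `F` is a strong deformation retract of `E`. -/
def IsStrongDeformationRetract {X : Type*} [MetricSpace X] (F E : Set X) : Prop :=
  F ⊆ E ∧ ∃ H : ℝ × X → X, ContinuousOn H (Set.Icc (0:ℝ) 1 ×ˢ E) ∧
    (∀ x ∈ E, H (0, x) = x) ∧ (∀ x ∈ E, H (1, x) ∈ F) ∧
    (∀ σ ∈ Set.Icc (0:ℝ) 1, ∀ x ∈ F, H (σ, x) = x) ∧
    (∀ σ ∈ Set.Icc (0:ℝ) 1, ∀ x ∈ E, H (σ, x) ∈ E)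

namespace Semiflow

variable {X : Type*} [MetricSpace X] (φ : Semiflow X)

/-- A Morse–Lyapunov function of the Morse decomposition `M` on `Ω`. -/
def IsMorseLyapunov (Ω : Set X) (l : ℕ) (M : ℕ → Set X) (V : X → ℝ) : Prop :=
  ContinuousOn V Ω ∧
  (∀ k, 1 ≤ k → k ≤ l → ∃ c : ℝ, ∀ x ∈ M k, V x = c) ∧
  (∀ x ∈ Ω \ ⋃ k ∈ Set.Icc 1 l, M k,
    StrictAntiOn (fun t : ℝ => V (φ.toFun t x)) (Set.Ici (0:ℝ)))

/-- A strict Morse–Lyapunov function: the values on the Morse sets are increasing. -/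
def IsStrictMorseLyapunov (Ω : Set X) (l : ℕ) (M : ℕ → Set X) (V : X → ℝ) : Prop :=
  φ.IsMorseLyapunov Ω l M V ∧ ∃ c : ℕ → ℝ,
    (∀ k, 1 ≤ k → k ≤ l → ∀ x ∈ M k, V x = c k) ∧
    (∀ j k, 1 ≤ j → j < k → k ≤ l → c j < c k)

end Semiflow

/-! A point of the basin enters, at some time `t₀ > 0`, the neighbourhood `U` that the
attractor attracts, because `U` contains a uniform thickening of the compact attractor. By continuity
of `S t₀` a whole ball around the point is mapped into `U`, and is therefore attracted as well.
Every point of an attracted ball lies in the basin, so the basin is open. -/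

namespace Semiflow

variable {X : Type*} [MetricSpace X] {φ : Semiflow X} {A B U : Set X}

theorem continuous_toFun (φ : Semiflow X) {t : ℝ} (ht : 0 ≤ t) : Continuous (φ.toFun t) :=
  φ.continuousOn.comp_continuous (continuous_const.prodMk continuous_id) fun _ => ⟨ht, mem_univ _⟩

theorem attracts_empty (φ : Semiflow X) (B : Set X) : φ.Attracts ∅ B :=
  fun ε hε => ⟨1, one_pos, fun t _ x _ => by rwa [infDist_empty]⟩

theorem Attracts.of_mapsTo {t₀ : ℝ} (hU : φ.Attracts A U) (ht₀ : 0 ≤ t₀)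
    (hB : MapsTo (φ.toFun t₀) B U) : φ.Attracts A B := by
  intro ε hε
  obtain ⟨T, hT, hTU⟩ := hU ε hε
  refine ⟨T + t₀, by linarith, fun t ht x hx => ?_⟩
  have hsplit : φ.toFun t x = φ.toFun (t - t₀) (φ.toFun t₀ x) := by
    rw [← φ.map_add _ _ (by linarith) ht₀, sub_add_cancel]
  rw [hsplit]
  exact hTU _ (by linarith) _ (hB hx)

theorem Attracts.subset_basin (h : φ.Attracts A B) : B ⊆ φ.basin A := fun x hx =>
  tendsto_order.2
    ⟨fun _ ha => Eventually.of_forall fun _ => ha.trans_le infDist_nonneg,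
      fun ε hε =>
        let ⟨T, _, hT⟩ := h ε hε
        (eventually_gt_atTop T).mono fun t ht => hT t ht x hx⟩

theorem eventually_mem_interior_of_mem_basin (hA : IsCompact A) (hA₀ : A.Nonempty)
    (hAU : A ⊆ interior U) {x : X} (hx : x ∈ φ.basin A) :
    ∀ᶠ t in atTop, φ.toFun t x ∈ interior U := by
  obtain ⟨δ, hδ, hthick⟩ := hA.exists_thickening_subset_open isOpen_interior hAU
  exact (hx.eventually (gt_mem_nhds hδ)).mono fun t ht =>
    hthick ((mem_thickening_iff_infDist_lt hA₀).2 ht)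

theorem IsAttractor.exists_ball_attracts (h : φ.IsAttractor A) {x : X} (hx : x ∈ φ.basin A) :
    ∃ ε > 0, φ.Attracts A (ball x ε) := by
  obtain rfl | hA₀ := A.eq_empty_or_nonempty
  · exact ⟨1, one_pos, φ.attracts_empty _⟩
  obtain ⟨hA, -, U, hAU, hU⟩ := h
  obtain ⟨t₀, hxU, ht₀⟩ :=
    ((eventually_mem_interior_of_mem_basin hA hA₀ hAU hx).and (eventually_gt_atTop 0)).exists
  obtain ⟨ε, hε, hball⟩ := Metric.mem_nhds_iff.1 <|
    (φ.continuous_toFun ht₀.le).continuousAt.preimage_mem_nhds (isOpen_interior.mem_nhds hxU)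
  exact ⟨ε, hε, hU.of_mapsTo ht₀.le fun _ hy => interior_subset (hball hy)⟩

theorem IsAttractor.isOpen_basin (h : φ.IsAttractor A) : IsOpen (φ.basin A) :=
  isOpen_iff_mem_nhds.2 fun x hx =>
    let ⟨_, hε, hball⟩ := h.exists_ball_attracts hx
    mem_of_superset (ball_mem_nhds x hε) hball.subset_basin

end Semiflow

theorem stmt3_general {X : Type*} [MetricSpace X] (φ : Semiflow X)
    (𝒜 : Set X) (h𝒜 : φ.IsAttractor 𝒜) :
    (∀ x ∈ φ.basin 𝒜, ∃ ε > (0:ℝ), φ.Attracts 𝒜 (Metric.ball x ε)) ∧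
      IsOpen (φ.basin 𝒜) :=
  ⟨fun _ hx => h𝒜.exists_ball_attracts hx, h𝒜.isOpen_basin⟩

/-- For every `x` in the attraction basin `Ω` of an attractor `𝒜` there is
`ε > 0` such that `𝒜` attracts `B(x,ε)`; in particular `Ω` is open. -/
theorem stmt3 {X : Type*} [MetricSpace X] [CompleteSpace X] (φ : Semiflow X)
    (hac : φ.AsympCompact) (𝒜 : Set X) (h𝒜 : φ.IsAttractor 𝒜) :
    (∀ x ∈ φ.basin 𝒜, ∃ ε > (0:ℝ), φ.Attracts 𝒜 (Metric.ball x ε)) ∧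
      IsOpen (φ.basin 𝒜) :=
  stmt3_general φ 𝒜 h𝒜
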